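/- Let E be an Archimedean Riesz space admitting a strictly positive linear functional φ : E → ℝ. Then E has the countable sup property: for every subset S of E whose supremum exists in E, there is an at most countable subset of S with the same supremum. -/
import Mathlib


/-- An Archimedean Riesz space admitting a strictly positive linear functional has the
countable sup property. -/
theorem stmt_8 {E : Type*} [Lattice E] [AddCommGroup E]
    [CovariantClass E E (· + ·) (· ≤ ·)] [Module ℝ E] [PosSMulMono ℝ E]
    (harch : ∀ x y : E, (∀ n : ℕ, n • x ≤ y) → x ≤ 0)
    (φ : E →ₗ[ℝ] ℝ) (hstrict : ∀ x : E, 0 < x → 0 < φ x)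
    (S : Set E) (x : E) (hx : IsLUB S x) :
    ∃ C : Set E, C ⊆ S ∧ C.Countable ∧ IsLUB C x := by
  classical
  rcases S.eq_empty_or_nonempty with hS | ⟨s0, hs0⟩
  · exact ⟨S, subset_rfl, by simp [hS], hx⟩
  -- φ is monotone
  have hnn : ∀ a : E, 0 ≤ a → 0 ≤ φ a := by
    intro a ha
    rcases ha.lt_or_eq with h | h
    · exact (hstrict a h).le
    · simp [← h]
  have hmono : ∀ a b : E, a ≤ b → φ a ≤ φ b := by
    intro a b hab
    have := hnn (b - a) (sub_nonneg.mpr hab)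
    rw [map_sub] at this
    linarith
  -- the set of values of φ at finite sups of elements of S
  set T : Set ℝ := {r | ∃ F : Finset E, ∃ h : F.Nonempty, ↑F ⊆ S ∧ φ (F.sup' h id) = r}
    with hT
  have hTne : T.Nonempty := by
    refine ⟨φ s0, {s0}, Finset.singleton_nonempty s0, ?_, by simp⟩
    simpa using hs0
  have hTbdd : BddAbove T := by
    refine ⟨φ x, ?_⟩
    rintro r ⟨F, h, hFS, rfl⟩
    exact hmono _ _ (Finset.sup'_le h id fun a ha => hx.1 (hFS ha))
  set s : ℝ := sSup T with hs
  have hchoice : ∀ n : ℕ, ∃ F : Finset E, ∃ h : F.Nonempty, ↑F ⊆ S ∧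
      s - 1 / (n + 1) < φ (F.sup' h id) := by
    intro n
    have hlt : s - 1 / (n + 1) < s := by
      have : (0:ℝ) < 1 / (n + 1) := by positivity
      linarith
    obtain ⟨r, ⟨F, h, hFS, rfl⟩, hr⟩ := exists_lt_of_lt_csSup hTne hlt
    exact ⟨F, h, hFS, hr⟩
  choose G hGne hGS hGlt using hchoice
  set H : ℕ → Finset E := fun n => (Finset.range (n + 1)).biUnion G with hH
  have hHne : ∀ n, (H n).Nonempty := by
    intro n
    exact (hGne 0).mono fun a ha =>
      Finset.mem_biUnion.mpr ⟨0, Finset.mem_range.mpr (Nat.succ_pos n), ha⟩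
  have hHS : ∀ n, ↑(H n) ⊆ S := by
    intro n a ha
    obtain ⟨i, _, hai⟩ := Finset.mem_biUnion.mp ha
    exact hGS i hai
  set e : ℕ → E := fun n => (H n).sup' (hHne n) id with he
  have heT : ∀ n, φ (e n) ∈ T := fun n => ⟨H n, hHne n, hHS n, rfl⟩
  have heub : ∀ n, φ (e n) ≤ s := fun n => le_csSup hTbdd (heT n)
  have heG : ∀ n, s - 1 / (n + 1) < φ (e n) := by
    intro n
    refine lt_of_lt_of_le (hGlt n) (hmono _ _ ?_)
    exact Finset.sup'_le (hGne n) id fun a ha =>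
      Finset.le_sup' id (Finset.mem_biUnion.mpr ⟨n, Finset.mem_range.mpr (Nat.lt_succ_self n), ha⟩)
  refine ⟨⋃ n, ↑(H n), ?_, Set.countable_iUnion fun n => (H n).countable_toSet, ?_, ?_⟩
  · exact Set.iUnion_subset fun n => hHS n
  · -- upper bound
    intro c hc
    obtain ⟨n, hn⟩ := Set.mem_iUnion.mp hc
    exact hx.1 (hHS n hn)
  · -- least
    intro u hu
    refine hx.2 fun y hy => ?_
    have heu : ∀ n, e n ≤ u := fun n =>
      Finset.sup'_le (hHne n) id fun a ha => hu (Set.mem_iUnion.mpr ⟨n, ha⟩)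
    set v : E := (y - u) ⊔ 0 with hv
    have hv0 : 0 ≤ v := le_sup_right
    have hkey : ∀ n : ℕ, φ v < 1 / (n + 1) := by
      intro n
      -- v ≤ (y ⊔ e n) - e n
      have h1 : v ≤ (y ⊔ e n) - e n := by
        apply sup_le
        · have : y - u ≤ y - e n := sub_le_sub_left (heu n) y
          exact this.trans (sub_le_sub_right le_sup_left (e n))
        · rw [sub_nonneg]; exact le_sup_right
      -- y ⊔ e n is a finite sup over H n ∪ {y}
      have h2 : φ (y ⊔ e n) ≤ s := by
        refine le_csSup hTbdd ⟨insert y (H n), Finset.insert_nonempty _ _, ?_, ?_⟩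
        · intro a ha
          rcases Finset.mem_insert.mp ha with rfl | ha
          · exact hy
          · exact hHS n ha
        · rw [Finset.sup'_insert]; rfl
      have h3 := hmono _ _ h1
      rw [map_sub] at h3
      have := heG n
      linarith
    have hφv : φ v ≤ 0 := by
      by_contra h
      push_neg at h
      obtain ⟨n, hn⟩ := exists_nat_one_div_lt h
      exact absurd (hkey n) (by push_cast at hn ⊢; linarith)
    have hveq : v = 0 := by
      rcases hv0.lt_or_eq with h | h
      · exact absurd (hstrict v h) (by linarith)
      · exact h.symm
    have : y - u ≤ 0 := by
      rw [← hveq]; exact le_sup_left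
    exact sub_nonpos.mp this
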